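/- arXiv:2306.07733 — 8 statements merged into one kernel-verified Lean document; each statement's English description precedes it below -/
import Mathlib

section
/- For every integer m ≥ 1 and every natural number n ≥ m+1, the backward-shifted Hankel determinant of central binomial coefficients satisfies det(B_{i+j−m})_{i,j=0}^{n−1} = (−1)^{binom(m+1,2)} · 2^{n−m−1} · p_{m+1}(n−m−1); moreover det(B_{i+j−m})_{i,j=0}^{n−1} = 0 for all n with 1 ≤ n ≤ m. -/
/-!
Write `H_N(a)` for the Hankel matrix `(a_{i+j})_{i,j<N}` and `D(k, t) = det H_{k+t}(a)` for
`a_j = B_{j+1-k}`; the theorem's matrix is the case `k = m + 1`. The Desnanot–Jacobi identity,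
proved through the Schur complement of the interior block, turns into the recurrence
`D(k+2, t+1) D(k, t+1) = D(k+2, t) D(k, t+2) - D(k+1, t+1)²` for Hankel matrices.
The closed form `(-1)^(k choose 2) 2^t p_k(t)` obeys the same recurrence: at natural `t` the
ratios `p_{k+1}(t) / p_k(t)` and `p_k(t+1) / p_k(t)` are explicit quotients of factorials, and the
recurrence reduces to a polynomial identity. It also has the right boundary values: for `t = 0`
the matrix is anti-triangular with ones on the antidiagonal, and for `k = 0, 1` the matrices
`(B_{i+j+1})` and `(B_{i+j})` factor as `T W Tᵀ` with `T = (binom(2i+s, i+s+r))` unitriangular and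
`W` diagonal, by a symmetric form of Vandermonde's identity. If `n ≤ m`, the first row vanishes.
-/

open Finset

/-- Central binomial coefficients extended to `ℤ` by `0` for negative indices. -/
def centralBinomZ (n : ℤ) : ℚ := if 0 ≤ n then ((2 * n.toNat).choose n.toNat : ℚ) else 0

/-- `p_m(x) = ∏_{1 ≤ i ≤ j ≤ m-1} (2x+i+j)/(i+j)`. -/
def pRat (m : ℕ) (x : ℚ) : ℚ :=
  ∏ i ∈ Finset.Icc 1 (m - 1), ∏ j ∈ Finset.Icc i (m - 1),
    (2 * x + (i : ℚ) + (j : ℚ)) / ((i : ℚ) + (j : ℚ))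

open scoped Nat

namespace Matrix

section Bordered

variable {R m : Type*} [CommRing R] [Fintype m] [DecidableEq m]

def borderedMinor (N : Matrix (m ⊕ Fin 2) (m ⊕ Fin 2) R) (i j : Fin 2) : R :=
  (N.submatrix (Sum.map id (Function.const (Fin 1) i)) (Sum.map id (Function.const (Fin 1) j))).det

theorem det_mul_det_toBlocks₁₁ (N : Matrix (m ⊕ Fin 2) (m ⊕ Fin 2) R)
    (h : IsUnit N.toBlocks₁₁.det) :
    N.det * N.toBlocks₁₁.det =
      N.borderedMinor 0 0 * N.borderedMinor 1 1 - N.borderedMinor 0 1 * N.borderedMinor 1 0 := by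
  let := N.toBlocks₁₁.invertibleOfIsUnitDet h
  set S := N.toBlocks₂₂ - N.toBlocks₂₁ * ⅟N.toBlocks₁₁ * N.toBlocks₁₂
  have minor (i j : Fin 2) : N.borderedMinor i j = N.toBlocks₁₁.det * S i j := by
    have : N.submatrix (Sum.map id (Function.const (Fin 1) i))
        (Sum.map id (Function.const (Fin 1) j)) =
        fromBlocks N.toBlocks₁₁ (N.toBlocks₁₂.submatrix id fun _ => j)
          (N.toBlocks₂₁.submatrix (fun _ => i) id)
          (N.toBlocks₂₂.submatrix (fun _ => i) fun _ => j) := by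
      ext (a | a) (b | b) <;> rfl
    rw [borderedMinor, this, det_fromBlocks₁₁, det_fin_one]
    simp [S, mul_apply]
  rw [← fromBlocks_toBlocks N, det_fromBlocks₁₁, fromBlocks_toBlocks, minor, minor, minor,
    minor, det_fin_two]
  ring

end Bordered

section CommRing

variable {R : Type*} [CommRing R]

theorem det_desnanot_jacobi {n : ℕ} (M : Matrix (Fin (n + 2)) (Fin (n + 2)) R)
    (h : IsUnit (M.submatrix (fun i : Fin n => i.castSucc.succ) fun i => i.castSucc.succ).det) :
    M.det * (M.submatrix (fun i : Fin n => i.castSucc.succ) fun i => i.castSucc.succ).det =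
      (M.submatrix Fin.succ Fin.succ).det * (M.submatrix Fin.castSucc Fin.castSucc).det -
        (M.submatrix Fin.succ Fin.castSucc).det * (M.submatrix Fin.castSucc Fin.succ).det := by
  -- `e` lists the interior indices, then the last and the first one. In an `(n + 1)`-minor,
  -- `r` moves the first index to the end; its sign cancels between the two cross minors.
  set eL : Fin n ⊕ Fin 1 ≃ Fin (n + 1) := finSumFinEquiv
  set r := finRotate (n + 1)
  set e : Fin n ⊕ Fin 2 ≃ Fin (n + 2) := finSumFinEquiv.trans (finRotate (n + 2))
  have he₀ : e ∘ Sum.map id (Function.const _ 0) = Fin.succ ∘ eL := by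
    ext (i | i)
    · simp [e, eL, Fin.val_add_one, Fin.ext_iff]
      omega
    · simp [e, eL, Fin.val_add_one, Fin.ext_iff]
  have he₁ : e ∘ Sum.map id (Function.const _ 1) = (Fin.castSucc ∘ r) ∘ eL := by
    ext (i | i)
    · simp [e, eL, r, Fin.val_add_one, Fin.ext_iff, show (i : ℕ) ≠ n by omega,
        show (i : ℕ) ≠ n + 1 by omega]
    · simp [e, eL, r, Fin.val_add_one, Fin.ext_iff]
  have hinterior : (M.submatrix e e).toBlocks₁₁ =
      M.submatrix (fun i : Fin n => i.castSucc.succ) fun i => i.castSucc.succ := by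
    ext i j
    exact congrArg₂ M (congrFun he₀ (.inl i)) (congrFun he₀ (.inl j))
  have hminor (F G : Fin (n + 1) → Fin (n + 2)) :
      (M.submatrix (F ∘ eL) (G ∘ eL)).det = (M.submatrix F G).det :=
    det_submatrix_equiv_self eL (M.submatrix F G)
  have hcorner : (M.submatrix (Fin.castSucc ∘ r) (Fin.castSucc ∘ r)).det =
      (M.submatrix Fin.castSucc Fin.castSucc).det :=
    det_submatrix_equiv_self r (M.submatrix Fin.castSucc Fin.castSucc)
  have hcross₁ : (M.submatrix Fin.succ (Fin.castSucc ∘ r)).det =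
      Equiv.Perm.sign r * (M.submatrix Fin.succ Fin.castSucc).det :=
    det_permute' r (M.submatrix Fin.succ Fin.castSucc)
  have hcross₂ : (M.submatrix (Fin.castSucc ∘ r) Fin.succ).det =
      Equiv.Perm.sign r * (M.submatrix Fin.castSucc Fin.succ).det :=
    det_permute r (M.submatrix Fin.castSucc Fin.succ)
  have hsign : ((Equiv.Perm.sign r : ℤ) : R) * (Equiv.Perm.sign r : ℤ) = 1 := by
    rw [← Int.cast_mul, ← Units.val_mul, Int.units_mul_self, Units.val_one, Int.cast_one]
  have key := det_mul_det_toBlocks₁₁ (M.submatrix e e) (hinterior ▸ h)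
  rw [det_submatrix_equiv_self, hinterior] at key
  simp only [borderedMinor, submatrix_submatrix, he₀, he₁, hminor] at key
  rw [key, hcorner, hcross₁, hcross₂, mul_mul_mul_comm, hsign, one_mul]

theorem det_eq_neg_one_pow_of_antitriangular :
    ∀ {n : ℕ} (M : Matrix (Fin n) (Fin n) R),
      (∀ i j : Fin n, (i : ℕ) + j + 1 < n → M i j = 0) →
        (∀ i j : Fin n, (i : ℕ) + j + 1 = n → M i j = 1) → M.det = (-1) ^ n.choose 2
  | 0, _, _, _ => by simp
  | n + 1, M, hzero, hone => by
    rw [det_succ_column_zero, sum_eq_single (Fin.last n)]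
    · rw [hone _ _ (by simp), Fin.succAbove_last,
        det_eq_neg_one_pow_of_antitriangular (M.submatrix Fin.castSucc Fin.succ)
          (fun i j h => hzero _ _ (by simp; omega)) (fun i j h => hone _ _ (by simp; omega)),
        Nat.choose_succ_succ', Nat.choose_one_right, pow_add]
      simp
    · intro i _ hi
      rw [hzero i 0 (by have := Fin.val_lt_last hi; simp; omega)]
      simp
    · simp

theorem mul_diagonal_mul_transpose_apply {m : Type*} [Fintype m] [DecidableEq m]
    (T : Matrix m m R) (w : m → R) (i j : m) :
    (T * diagonal w * Tᵀ) i j = ∑ r, T i r * w r * T j r := by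
  rw [mul_apply]
  simp only [mul_diagonal, transpose_apply]

theorem det_mul_diagonal_mul_transpose {m : Type*} [Fintype m] [DecidableEq m] [LinearOrder m]
    {T : Matrix m m R} (hT : T.IsLowerTriangular) (hdiag : ∀ i, T i i = 1) (w : m → R) :
    (T * diagonal w * Tᵀ).det = ∏ i, w i := by
  rw [det_mul, det_mul, det_transpose, det_of_isLowerTriangular T hT, det_diagonal]
  simp [hdiag]

end CommRing

section Hankel

variable {α : Type*}

def hankel (a : ℤ → α) (n : ℕ) : Matrix (Fin n) (Fin n) α :=
  of fun i j => a (((i : ℕ) : ℤ) + ((j : ℕ) : ℤ))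

variable (a : ℤ → α) (n : ℕ)

theorem hankel_apply (i j : Fin n) : hankel a n i j = a (((i : ℕ) : ℤ) + ((j : ℕ) : ℤ)) :=
  rfl

theorem hankel_submatrix_succ_succ :
    (hankel a (n + 1)).submatrix Fin.succ Fin.succ = hankel (fun k => a (k + 2)) n := by
  ext i j
  simp only [submatrix_apply, hankel_apply, Fin.val_succ]
  push_cast
  ring_nf

theorem hankel_submatrix_castSucc_castSucc :
    (hankel a (n + 1)).submatrix Fin.castSucc Fin.castSucc = hankel a n := rfl

theorem hankel_submatrix_succ_castSucc :
    (hankel a (n + 1)).submatrix Fin.succ Fin.castSucc = hankel (fun k => a (k + 1)) n := by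
  ext i j
  simp only [submatrix_apply, hankel_apply, Fin.val_succ, Fin.val_castSucc]
  push_cast
  ring_nf

theorem hankel_submatrix_castSucc_succ :
    (hankel a (n + 1)).submatrix Fin.castSucc Fin.succ = hankel (fun k => a (k + 1)) n := by
  ext i j
  simp only [submatrix_apply, hankel_apply, Fin.val_succ, Fin.val_castSucc]
  push_cast
  ring_nf

theorem hankel_submatrix_castSucc_succ_castSucc_succ :
    ((hankel a (n + 2)).submatrix (fun i : Fin n => i.castSucc.succ) fun i => i.castSucc.succ) =
      hankel (fun k => a (k + 2)) n := by
  ext i j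
  simp only [submatrix_apply, hankel_apply, Fin.val_succ, Fin.val_castSucc]
  push_cast
  ring_nf

end Hankel

theorem det_hankel_desnanot_jacobi {R : Type*} [CommRing R] (a : ℤ → R) (n : ℕ)
    (h : IsUnit (hankel (fun k => a (k + 2)) n).det) :
    (hankel a (n + 2)).det * (hankel (fun k => a (k + 2)) n).det =
      (hankel a (n + 1)).det * (hankel (fun k => a (k + 2)) (n + 1)).det -
        (hankel (fun k => a (k + 1)) (n + 1)).det ^ 2 := by
  have := det_desnanot_jacobi (hankel a (n + 2))
    (by rwa [hankel_submatrix_castSucc_succ_castSucc_succ])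
  rw [hankel_submatrix_castSucc_succ_castSucc_succ, hankel_submatrix_succ_succ,
    hankel_submatrix_castSucc_castSucc, hankel_submatrix_succ_castSucc,
    hankel_submatrix_castSucc_succ] at this
  linear_combination this

end Matrix

open Matrix

-- Vandermonde's convolution, split at `i + s` with the lower half reflected by `choose_symm`.
theorem Nat.add_choose_eq_centered (i j s N : ℕ) (hi : i + s ≤ N) (hj : j < N) :
    (2 * i + s + (2 * j + s)).choose (i + j + s) =
      ∑ r ∈ range N, (2 * i + s).choose (i + 1 + r) * (2 * j + s).choose (j + 1 + r) +
        ∑ r ∈ range N, (2 * i + s).choose (i + s + r) * (2 * j + s).choose (j + s + r) := by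
  have hlow : ∀ r ≥ i + s,
      (2 * i + s).choose (i + 1 + r) * (2 * j + s).choose (j + 1 + r) = 0 :=
    fun r hr => by rw [Nat.choose_eq_zero_of_lt (by omega), zero_mul]
  have hhigh : ∀ r ≥ j + 1,
      (2 * i + s).choose (i + s + r) * (2 * j + s).choose (j + s + r) = 0 :=
    fun r hr => by rw [Nat.choose_eq_zero_of_lt (n := 2 * j + s) (by omega), mul_zero]
  rw [eventually_constant_sum hlow hi, eventually_constant_sum hhigh hj, Nat.add_choose_eq,
    Nat.sum_antidiagonal_eq_sum_range_succ_mk, Nat.succ_eq_add_one,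
    show i + j + s + 1 = i + s + (j + 1) by ring, sum_range_add, ← sum_range_reflect]
  congr 1 <;> refine sum_congr rfl fun r hr => ?_ <;> rw [mem_range] at hr
  · rw [← Nat.choose_symm (by omega), show i + j + s - (i + s - 1 - r) = j + 1 + r by omega]
    congr 2
    omega
  · rw [show i + j + s - (i + s + r) = j - r by omega,
      ← Nat.choose_symm (n := 2 * j + s) (by omega)]
    congr 2
    omega

theorem Nat.centralBinom_add_add_one_eq_sum (i j N : ℕ) (hi : i < N) (hj : j < N) :
    (i + j + 1).centralBinom =
      ∑ r ∈ range N, 2 * ((2 * i + 1).choose (i + 1 + r) * (2 * j + 1).choose (j + 1 + r)) := by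
  rw [Nat.centralBinom_eq_two_mul_choose, show 2 * (i + j + 1) = 2 * i + 1 + (2 * j + 1) by ring,
    Nat.add_choose_eq_centered i j 1 N hi hj, ← two_mul, mul_sum]

theorem Nat.centralBinom_add_eq_sum (i j N : ℕ) (hi : i < N) (hj : j < N) :
    (i + j).centralBinom =
      ∑ r ∈ range N,
        (if r = 0 then 1 else 2) * ((2 * i).choose (i + r) * (2 * j).choose (j + r)) := by
  rcases N with _ | N
  · omega
  have key := Nat.add_choose_eq_centered i j 0 (N + 1) (by omega) hj
  simp only [add_zero, add_right_comm _ 1, add_assoc] at key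
  rw [Nat.centralBinom_eq_two_mul_choose, mul_add, key, sum_range_succ, sum_range_succ' _ N,
    sum_range_succ' _ N, Nat.choose_eq_zero_of_lt (n := 2 * i) (by omega)]
  simp only [Nat.add_one_ne_zero, if_false, if_true, ← mul_sum]
  ring

theorem centralBinomZ_natCast (k : ℕ) : centralBinomZ k = k.centralBinom := by
  simp [centralBinomZ, Nat.centralBinom_eq_two_mul_choose]

theorem centralBinomZ_of_neg {k : ℤ} (hk : k < 0) : centralBinomZ k = 0 := by
  simp [centralBinomZ, not_le.2 hk]

theorem det_hankel_centralBinomZ_add_one (N : ℕ) :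
    (hankel (fun k => centralBinomZ (k + 1)) N).det = 2 ^ N := by
  set T : Matrix (Fin N) (Fin N) ℚ := of fun i r => ((2 * (i : ℕ) + 1).choose (i + 1 + r) : ℚ)
  have hT : T.IsLowerTriangular := fun i r (hir : i < r) => by
    simp [T, Nat.choose_eq_zero_of_lt (show 2 * (i : ℕ) + 1 < i + 1 + r by omega)]
  have hdiag (i : Fin N) : T i i = 1 := by simp [T, show (i : ℕ) + 1 + i = 2 * i + 1 by ring]
  have hfactor : hankel (fun k => centralBinomZ (k + 1)) N = T * diagonal (fun _ => 2) * Tᵀ := by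
    ext i j
    rw [mul_diagonal_mul_transpose_apply, hankel_apply, ← Nat.cast_add, ← Nat.cast_add_one,
      centralBinomZ_natCast, Nat.centralBinom_add_add_one_eq_sum i j N i.isLt j.isLt]
    push_cast
    rw [← Fin.sum_univ_eq_sum_range]
    exact sum_congr rfl fun r _ => by simp only [T, of_apply]; ring
  rw [hfactor, det_mul_diagonal_mul_transpose hT hdiag]
  simp

theorem det_hankel_centralBinomZ (N : ℕ) : (hankel centralBinomZ (N + 1)).det = 2 ^ N := by
  set T : Matrix (Fin (N + 1)) (Fin (N + 1)) ℚ :=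
    of fun i r => ((2 * (i : ℕ)).choose (i + r) : ℚ)
  have hT : T.IsLowerTriangular := fun i r (hir : i < r) => by
    simp [T, Nat.choose_eq_zero_of_lt (show 2 * (i : ℕ) < i + r by omega)]
  have hdiag (i : Fin (N + 1)) : T i i = 1 := by simp [T, ← two_mul]
  set w : Fin (N + 1) → ℚ := fun r => if (r : ℕ) = 0 then 1 else 2
  have hfactor : hankel centralBinomZ (N + 1) = T * diagonal w * Tᵀ := by
    ext i j
    rw [mul_diagonal_mul_transpose_apply, hankel_apply, ← Nat.cast_add, centralBinomZ_natCast,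
      Nat.centralBinom_add_eq_sum i j (N + 1) i.isLt j.isLt]
    push_cast
    rw [← Fin.sum_univ_eq_sum_range]
    exact sum_congr rfl fun r _ => by simp only [T, w, of_apply]; split_ifs <;> ring
  rw [hfactor, det_mul_diagonal_mul_transpose hT hdiag, Fin.prod_univ_succ]
  simp [w]

theorem prod_Icc_natCast_add (c t : ℕ) : ∏ i ∈ Icc 1 t, ((c : ℚ) + i) = (c + t)! / c ! := by
  induction t with
  | zero => simp [Nat.factorial_ne_zero]
  | succ t ih =>
    rw [prod_Icc_succ_top (by omega), ih, ← add_assoc, Nat.factorial_succ]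
    push_cast
    field_simp
    ring

theorem pRat_succ (k : ℕ) (x : ℚ) :
    pRat (k + 1) x = pRat k x * ∏ i ∈ Icc 1 k, (2 * x + i + k) / (i + k) := by
  rcases k with _ | k
  · simp [pRat]
  simp only [pRat, Nat.add_sub_cancel]
  rw [prod_Icc_succ_top (by omega), Icc_self, prod_singleton,
    prod_congr rfl fun i hi => prod_Icc_succ_top (by simp at hi; omega) _, prod_mul_distrib,
    prod_Icc_succ_top (by omega)]
  push_cast
  ring

def succRatio (k t : ℕ) : ℚ := ((2 * t + 2 * k)! * k ! : ℚ) / ((2 * t + k)! * (2 * k)!)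

def addOneRatio (k t : ℕ) : ℚ :=
  ((2 * t + 2 * k)! * (2 * t + 1)! : ℚ) / ((2 * t + k)! * (2 * t + k + 1)!)

theorem pRat_succ_natCast (k t : ℕ) : pRat (k + 1) t = pRat k t * succRatio k t := by
  rw [pRat_succ, succRatio]
  congr 1
  have (i : ℕ) :
      (2 * (t : ℚ) + i + k) / (i + k) = (((2 * t + k : ℕ) : ℚ) + i) / ((k : ℚ) + i) := by
    push_cast; ring_nf
  simp only [this, prod_div_distrib, prod_Icc_natCast_add]
  rw [show 2 * t + k + k = 2 * t + 2 * k by ring, show k + k = 2 * k by ring]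
  field_simp

theorem addOneRatio_mul_succRatio (k t : ℕ) :
    addOneRatio k t * succRatio k (t + 1) = succRatio k t * addOneRatio (k + 1) t := by
  simp only [addOneRatio, succRatio, show 2 * (t + 1) + 2 * k = 2 * t + 2 * (k + 1) by ring,
    show 2 * (t + 1) + k = 2 * t + (k + 1) + 1 by ring,
    show 2 * t + k + 1 = 2 * t + (k + 1) by ring]
  ring

theorem pRat_natCast_add_one (k t : ℕ) :
    pRat k ((t + 1 : ℕ) : ℚ) = pRat k t * addOneRatio k t := by
  induction k with
  | zero =>
    simp [pRat, addOneRatio, Nat.factorial_ne_zero]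
  | succ k ih =>
    rw [pRat_succ_natCast, ih, pRat_succ_natCast, mul_assoc, addOneRatio_mul_succRatio, mul_assoc]

theorem succRatio_succ (k s : ℕ) :
    succRatio (k + 1) s * ((2 * s + k + 1) * (2 * k + 1)) =
      succRatio k s * ((2 * s + 2 * k + 1) * (s + k + 1)) := by
  rw [succRatio, succRatio, show 2 * s + 2 * (k + 1) = 2 * s + 2 * k + 1 + 1 by ring,
    show 2 * s + (k + 1) = 2 * s + k + 1 by ring, show 2 * (k + 1) = 2 * k + 1 + 1 by ring]
  simp only [Nat.factorial_succ]
  push_cast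
  field_simp
  ring

theorem addOneRatio_add_one (k t : ℕ) :
    addOneRatio k (t + 1) * ((2 * t + 2 * k + 3) * (t + k + 2)) =
      addOneRatio (k + 2) t * ((t + 1) * (2 * t + 3)) := by
  simp only [addOneRatio, show 2 * (t + 1) + 2 * k = 2 * t + 2 * k + 2 by ring,
    show 2 * (t + 1) + 1 = 2 * t + 3 by ring, show 2 * (t + 1) + k = 2 * t + k + 2 by ring,
    show 2 * t + 2 * (k + 2) = 2 * t + 2 * k + 4 by ring,
    show 2 * t + (k + 2) = 2 * t + k + 2 by ring]
  simp only [Nat.factorial_succ]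
  push_cast
  field_simp
  ring

theorem pRat_condensation (k t : ℕ) :
    pRat (k + 2) ((t + 1 : ℕ) : ℚ) * pRat k ((t + 1 : ℕ) : ℚ) =
      pRat (k + 2) t * pRat k ((t + 2 : ℕ) : ℚ) + pRat (k + 1) ((t + 1 : ℕ) : ℚ) ^ 2 := by
  set B := pRat k ((t + 1 : ℕ) : ℚ)
  set m₀ := succRatio k (t + 1)
  set m₁ := succRatio (k + 1) (t + 1)
  set x₁ := addOneRatio k (t + 1)
  set x₂ := addOneRatio (k + 2) t
  have hA : pRat (k + 1) ((t + 1 : ℕ) : ℚ) = B * m₀ := pRat_succ_natCast k (t + 1)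
  have hQ : pRat (k + 2) ((t + 1 : ℕ) : ℚ) = B * m₀ * m₁ := by
    rw [← hA]; exact pRat_succ_natCast (k + 1) (t + 1)
  have hC : pRat k ((t + 2 : ℕ) : ℚ) = B * x₁ := pRat_natCast_add_one k (t + 1)
  have hP : pRat (k + 2) t * x₂ = B * m₀ * m₁ := by
    rw [← hQ]; exact (pRat_natCast_add_one (k + 2) t).symm
  have hx₂ : x₂ ≠ 0 := by simp only [x₂, addOneRatio]; positivity
  -- after multiplying by `(2t+2k+3)(t+k+2)`, this is
  -- `(t+1)(2t+3) + (2t+k+3)(2k+1) = (2t+2k+3)(t+k+2)`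
  have hratio : m₁ * x₂ = m₁ * x₁ + m₀ * x₂ := by
    have hD : ((2 * (t : ℚ) + 2 * k + 3) * (t + k + 2)) ≠ 0 := by positivity
    apply mul_right_cancel₀ hD
    have hm := succRatio_succ k (t + 1)
    have hx := addOneRatio_add_one k t
    push_cast at hm
    linear_combination (-m₁) * hx + x₂ * hm
  apply mul_right_cancel₀ hx₂
  rw [hQ, hC, hA]
  linear_combination (B ^ 2 * m₀) * hratio - (B * x₁) * hP

theorem pRat_pos (k : ℕ) {x : ℚ} (hx : -1 < x) : 0 < pRat k x := by
  refine prod_pos fun i hi => prod_pos fun j hj => ?_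
  have hi1 : (1 : ℚ) ≤ i := by exact_mod_cast (mem_Icc.1 hi).1
  have hj1 : (1 : ℚ) ≤ j := by exact_mod_cast (mem_Icc.1 hi).1.trans (mem_Icc.1 hj).1
  exact div_pos (by linarith) (by linarith)

theorem pRat_apply_zero (k : ℕ) : pRat k 0 = 1 := by
  refine prod_eq_one fun i hi => prod_eq_one fun j hj => ?_
  have hi1 : (1 : ℚ) ≤ i := by exact_mod_cast (mem_Icc.1 hi).1
  rw [mul_zero, zero_add, div_self (by positivity)]

theorem neg_one_pow_choose_two_add_two {M : Type*} [Monoid M] [HasDistribNeg M] (k : ℕ) :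
    (-1 : M) ^ (k + 2).choose 2 = -(-1) ^ k.choose 2 := by
  have : (k + 2).choose 2 = k.choose 2 + (2 * k + 1) := by
    simp [Nat.choose_succ_succ']; ring
  rw [this, pow_add, (odd_two_mul_add_one k).neg_one_pow, mul_neg_one]

def hankelDetFormula (k t : ℕ) : ℚ := (-1) ^ k.choose 2 * 2 ^ t * pRat k t

theorem hankelDetFormula_ne_zero (k t : ℕ) : hankelDetFormula k t ≠ 0 := by
  have := pRat_pos k (x := t) (by linarith [t.cast_nonneg (α := ℚ)])
  unfold hankelDetFormula
  positivity

theorem hankelDetFormula_condensation (k t : ℕ) :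
    hankelDetFormula (k + 2) (t + 1) * hankelDetFormula k (t + 1) =
      hankelDetFormula (k + 2) t * hankelDetFormula k (t + 2) -
        hankelDetFormula (k + 1) (t + 1) ^ 2 := by
  have hs : ((-1 : ℚ) ^ k.choose 2) ^ 2 = 1 := by
    rw [← pow_mul, pow_mul', neg_one_sq, one_pow]
  have hu : ((-1 : ℚ) ^ (k + 1).choose 2) ^ 2 = 1 := by
    rw [← pow_mul, pow_mul', neg_one_sq, one_pow]
  simp only [hankelDetFormula, neg_one_pow_choose_two_add_two]
  linear_combination
    (-(2 : ℚ) ^ (2 * t + 2) * ((-1 : ℚ) ^ k.choose 2) ^ 2) * pRat_condensation k t +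
      (2 : ℚ) ^ (2 * t + 2) * pRat (k + 1) ((t + 1 : ℕ) : ℚ) ^ 2 * (hu - hs)

def shiftedCentralBinom (k : ℕ) (j : ℤ) : ℚ := centralBinomZ (j + 1 - k)

theorem shiftedCentralBinom_shift_two (k : ℕ) :
    (fun j => shiftedCentralBinom (k + 2) (j + 2)) = shiftedCentralBinom k := by
  funext j; simp only [shiftedCentralBinom]; push_cast; ring_nf

theorem shiftedCentralBinom_shift_one (k : ℕ) :
    (fun j => shiftedCentralBinom (k + 2) (j + 1)) = shiftedCentralBinom (k + 1) := by
  funext j; simp only [shiftedCentralBinom]; push_cast; ring_nf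

theorem det_hankel_shiftedCentralBinom_self (k : ℕ) :
    (hankel (shiftedCentralBinom k) k).det = (-1) ^ k.choose 2 := by
  refine det_eq_neg_one_pow_of_antitriangular _ (fun i j h => ?_) fun i j h => ?_
  · exact centralBinomZ_of_neg (by omega)
  · simp [hankel_apply, shiftedCentralBinom, centralBinomZ,
      show ((i : ℕ) : ℤ) + (j : ℕ) + 1 - k = 0 by omega]

theorem det_hankel_shiftedCentralBinom (k t : ℕ) :
    (hankel (shiftedCentralBinom k) (k + t)).det = hankelDetFormula k t := by
  induction k using Nat.twoStepInduction generalizing t with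
  | zero =>
    have : shiftedCentralBinom 0 = fun j => centralBinomZ (j + 1) := by
      funext j; simp [shiftedCentralBinom]
    simp [this, det_hankel_centralBinomZ_add_one, hankelDetFormula, pRat]
  | one =>
    have : shiftedCentralBinom 1 = centralBinomZ := by funext j; simp [shiftedCentralBinom]
    rw [this, add_comm, det_hankel_centralBinomZ]
    simp [hankelDetFormula, pRat]
  | more k ih₀ ih₁ =>
    induction t with
    | zero => simp [det_hankel_shiftedCentralBinom_self, hankelDetFormula, pRat_apply_zero]
    | succ t iht =>
      have h₀ := ih₀ (t + 1)
      have h₁ := ih₁ (t + 1)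
      have h₂ := ih₀ (t + 2)
      rw [show k + (t + 1) = k + t + 1 by ring] at h₀
      rw [show k + 1 + (t + 1) = k + t + 1 + 1 by ring] at h₁
      rw [show k + (t + 2) = k + t + 1 + 1 by ring] at h₂
      rw [show k + 2 + t = k + t + 1 + 1 by ring] at iht
      have hjacobi := det_hankel_desnanot_jacobi (shiftedCentralBinom (k + 2)) (k + t + 1)
        (by rw [shiftedCentralBinom_shift_two, h₀]; exact (hankelDetFormula_ne_zero k _).isUnit)
      rw [shiftedCentralBinom_shift_two, shiftedCentralBinom_shift_one, h₀, h₁, h₂, iht,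
        ← hankelDetFormula_condensation] at hjacobi
      rw [show k + 2 + (t + 1) = k + t + 1 + 2 by ring]
      exact mul_right_cancel₀ (hankelDetFormula_ne_zero k (t + 1)) hjacobi

theorem stmt3_general (m : ℕ) :
    (∀ n : ℕ, m + 1 ≤ n →
      Matrix.det (Matrix.of fun i j : Fin n =>
          centralBinomZ (((i : ℕ) : ℤ) + ((j : ℕ) : ℤ) - (m : ℤ))) =
        (-1 : ℚ) ^ ((m + 1).choose 2) * 2 ^ (n - m - 1) *
          pRat (m + 1) ((n : ℚ) - (m : ℚ) - 1)) ∧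
    (∀ n : ℕ, 1 ≤ n → n ≤ m →
      Matrix.det (Matrix.of fun i j : Fin n =>
          centralBinomZ (((i : ℕ) : ℤ) + ((j : ℕ) : ℤ) - (m : ℤ))) = 0) := by
  refine ⟨fun n hn => ?_, fun n hn hnm => ?_⟩
  · obtain ⟨t, rfl⟩ := Nat.exists_eq_add_of_le hn
    have hseq : shiftedCentralBinom (m + 1) = fun k => centralBinomZ (k - m) := by
      funext k; simp only [shiftedCentralBinom]; push_cast; ring_nf
    have := det_hankel_shiftedCentralBinom (m + 1) t
    rw [hseq] at this
    rw [show m + 1 + t - m - 1 = t by omega,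
      show ((m + 1 + t : ℕ) : ℚ) - m - 1 = t by push_cast; ring]
    exact this
  · obtain ⟨n, rfl⟩ := Nat.exists_eq_add_of_le' hn
    exact det_eq_zero_of_row_eq_zero 0 fun j => centralBinomZ_of_neg (by simp; omega)

theorem stmt3 (m : ℕ) (hm : 1 ≤ m) :
    (∀ n : ℕ, m + 1 ≤ n →
      Matrix.det (Matrix.of fun i j : Fin n =>
          centralBinomZ (((i : ℕ) : ℤ) + ((j : ℕ) : ℤ) - (m : ℤ))) =
        (-1 : ℚ) ^ ((m + 1).choose 2) * 2 ^ (n - m - 1) *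
          pRat (m + 1) ((n : ℚ) - (m : ℚ) - 1)) ∧
    (∀ n : ℕ, 1 ≤ n → n ≤ m →
      Matrix.det (Matrix.of fun i j : Fin n =>
          centralBinomZ (((i : ℕ) : ℤ) + ((j : ℕ) : ℤ) - (m : ℤ))) = 0) :=
  stmt3_general m
end

section
/- Let a : ℤ → ℚ satisfy a(n) = 0 for n < 0 and a(0) ≠ 0, let A(x) = Σ_{n ≥ 0} a(n) x^n be the associated formal power series over ℚ, and let b(n) denote the coefficient of x^n in the multiplicative inverse power series 1/A(x). Then for every n ∈ ℕ, det(a(i+j−n+2))_{i,j=0}^{n−1} = (−1)^{binom(n+1,2)} · a(0)^{n+1} · b(n). -/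
/-!
Let `L` be the `(n+1) × (n+1)` lower-triangular Toeplitz matrix `L i j = a (i - j)`.
Truncating power series to degree `n` is multiplicative, so `L⁻¹` is the Toeplitz matrix of
`1 / A(x)`, and `b(n)` is its bottom-left entry. By the adjugate formula that entry is
`(-1)^n / a(0)^(n+1)` times the minor of `L` obtained by deleting its first row and last column,
a Hessenberg–Toeplitz matrix. Reversing the order of the rows of the given Hankel matrix yields
the transpose of that minor, at the cost of the sign `(-1)^(n choose 2)`.
-/

open Finset Matrix PowerSeries

theorem Fin.sign_revPerm : ∀ n : ℕ,
    Equiv.Perm.sign (Fin.revPerm : Equiv.Perm (Fin n)) = (-1) ^ n.choose 2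
  | 0 => rfl
  | n + 1 => by
    have h : (Fin.revPerm : Equiv.Perm (Fin (n + 1))) =
        (finRotate (n + 1)).symm * Equiv.Perm.decomposeFin.symm (0, Fin.revPerm) := by
      ext i
      refine Fin.cases ?_ (fun i => ?_) i <;> simp [Fin.coe_sub_one]
    rw [h, Equiv.Perm.sign_mul, Equiv.Perm.sign_symm, sign_finRotate,
      Equiv.Perm.decomposeFin.symm_sign, Fin.sign_revPerm n, if_pos rfl, one_mul, ← pow_add,
      Nat.add_sub_cancel, Nat.choose_succ_succ' n 1, Nat.choose_one_right, add_comm]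

theorem Matrix.det_submatrix_rev_id {R : Type*} [CommRing R] {n : ℕ}
    (A : Matrix (Fin n) (Fin n) R) :
    (A.submatrix Fin.rev id).det = (-1) ^ n.choose 2 * A.det := by
  have h := det_permute Fin.revPerm A
  rw [Fin.sign_revPerm] at h
  push_cast at h
  exact h

namespace PowerSeries

section Semiring

variable {R : Type*} [Semiring R]

noncomputable def lowerToeplitz (f : R⟦X⟧) (n : ℕ) : Matrix (Fin n) (Fin n) R :=
  of fun i j => if j ≤ i then coeff ((i : ℕ) - j) f else 0

theorem lowerToeplitz_mul (f g : R⟦X⟧) (n : ℕ) :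
    lowerToeplitz f n * lowerToeplitz g n = lowerToeplitz (f * g) n := by
  ext i j
  simp only [lowerToeplitz, mul_apply, of_apply, ite_mul, zero_mul, mul_ite, mul_zero,
    Fin.le_iff_val_le_val]
  rw [Fin.sum_univ_eq_sum_range (fun k => if (j : ℕ) ≤ k then if k ≤ (i : ℕ) then
      coeff ((i : ℕ) - k) f * coeff (k - j) g else 0 else 0) n, ← sum_filter, ← sum_filter]
  have hsupport : {k ∈ {k ∈ range n | (j : ℕ) ≤ k} | k ≤ (i : ℕ)} = Icc (j : ℕ) i := by
    ext k
    simp only [mem_filter, mem_range, mem_Icc]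
    omega
  rw [hsupport]
  split_ifs with hji
  · rw [coeff_mul]
    refine sum_nbij' (fun k => ((i : ℕ) - k, k - j)) (fun p => j + p.2) ?_ ?_ ?_ ?_
      fun _ _ => rfl
    all_goals intro x; simp only [mem_Icc, HasAntidiagonal.mem_antidiagonal, Prod.ext_iff]; omega
  · exact sum_eq_zero fun k hk => by simp only [mem_Icc] at hk; omega

theorem lowerToeplitz_one (n : ℕ) : lowerToeplitz (1 : R⟦X⟧) n = 1 := by
  ext i j
  simp only [lowerToeplitz, of_apply, coeff_one, one_apply, Fin.ext_iff, Fin.le_iff_val_le_val]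
  split_ifs <;> first | rfl | omega

theorem lowerToeplitz_isLowerTriangular (f : R⟦X⟧) (n : ℕ) :
    (lowerToeplitz f n).IsLowerTriangular :=
  fun _ _ hij => if_neg (not_le.2 hij)

end Semiring

theorem det_lowerToeplitz {R : Type*} [CommRing R] (f : R⟦X⟧) (n : ℕ) :
    (lowerToeplitz f n).det = constantCoeff f ^ n := by
  rw [det_of_isLowerTriangular _ (lowerToeplitz_isLowerTriangular f n)]
  simp [lowerToeplitz]

variable {K : Type*} [Field K] {f : K⟦X⟧}

theorem inv_lowerToeplitz (hf : constantCoeff f ≠ 0) (n : ℕ) :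
    (lowerToeplitz f n)⁻¹ = lowerToeplitz f⁻¹ n :=
  inv_eq_right_inv <| by
    rw [lowerToeplitz_mul, PowerSeries.mul_inv_cancel f hf, lowerToeplitz_one]

theorem det_lowerToeplitz_submatrix_succ_castSucc (hf : constantCoeff f ≠ 0) (n : ℕ) :
    ((lowerToeplitz f (n + 1)).submatrix Fin.succ Fin.castSucc).det =
      (-1) ^ n * constantCoeff f ^ (n + 1) * coeff n f⁻¹ := by
  have hcoeff : coeff n f⁻¹ = (lowerToeplitz f (n + 1))⁻¹ (Fin.last n) 0 := by
    rw [inv_lowerToeplitz hf]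
    simp [lowerToeplitz]
  rw [hcoeff, Matrix.inv_def, Matrix.smul_apply, adjugate_fin_succ_eq_det_submatrix,
    Fin.succAbove_zero, Fin.succAbove_last, det_lowerToeplitz, Ring.inverse_eq_inv']
  simp only [Fin.val_zero, Fin.val_last, zero_add, smul_eq_mul]
  rw [mul_assoc, mul_inv_cancel_left₀ (pow_ne_zero _ hf), ← mul_assoc, ← mul_pow, neg_one_mul,
    neg_neg, one_pow, one_mul]

end PowerSeries

theorem stmt8 (a : ℤ → ℚ) (haneg : ∀ n : ℤ, n < 0 → a n = 0) (ha0 : a 0 ≠ 0) (n : ℕ) :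
    Matrix.det (Matrix.of fun i j : Fin n =>
        a (((i : ℕ) : ℤ) + ((j : ℕ) : ℤ) - (n : ℤ) + 2)) =
      (-1 : ℚ) ^ ((n + 1).choose 2) * (a 0) ^ (n + 1) *
        PowerSeries.coeff n ((PowerSeries.mk fun k : ℕ => a (k : ℤ))⁻¹) := by
  set f := PowerSeries.mk fun k : ℕ => a (k : ℤ)
  have hf : constantCoeff f = a 0 := by simp [f]
  have hHankel : (Matrix.of fun i j : Fin n => a (((i : ℕ) : ℤ) + ((j : ℕ) : ℤ) - (n : ℤ) + 2)) =
      ((f.lowerToeplitz (n + 1)).submatrix Fin.succ Fin.castSucc)ᵀ.submatrix Fin.rev id := by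
    ext i j
    simp only [of_apply, submatrix_apply, transpose_apply, lowerToeplitz, Fin.le_iff_val_le_val,
      Fin.val_succ, Fin.val_castSucc, Fin.val_rev, id, f, coeff_mk]
    split_ifs with h
    · congr 1
      omega
    · exact haneg _ (by omega)
  rw [hHankel, det_submatrix_rev_id, det_transpose,
    det_lowerToeplitz_submatrix_succ_castSucc (hf ▸ ha0), hf, Nat.choose_succ_succ' n 1,
    Nat.choose_one_right, pow_add]
  ring
end

section
/- Let C(x) = Σ_{n ≥ 0} C_n x^n be the generating function of the Catalan numbers as a formal power series over ℚ. Then for every integer k ≥ 1 and every n ∈ ℕ, the coefficient of x^n in C(x)^k equals binom(2n+k−1,n) − binom(2n+k−1,n−1) = (k/(2n+k)) · binom(2n+k,n) (with the convention binom(2n+k−1,−1) = 0). -/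
/-!
The Catalan series satisfies `C = 1 + X C²`, so `C^(k+1) = C^k + X C^(k+2)`. Comparing
coefficients of `X^(n+1)` gives the recurrence `b(n+1, k+1) = b(n+1, k) + b(n, k+2)`, with
`b(0, k) = 1` and `b(n+1, 0) = 0`, which the ballot numbers
`b(n, k) = binom(2n+k-1, n) - binom(2n+k-1, n-1)` also satisfy by Pascal's rule; induction on
`n` and then on `k` identifies the two. The closed form `k/(2n+k) · binom(2n+k, n)` follows from
the two absorption identities for binomial coefficients.
-/

open PowerSeries

/-- The `if` encodes the convention `binom(2n+k-1, -1) = 0`. -/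
def ballotNumber (R : Type*) [Ring R] (n k : ℕ) : R :=
  ((2 * n + k - 1).choose n : R) - if n = 0 then 0 else ((2 * n + k - 1).choose (n - 1) : R)

section ballotNumber

variable {R : Type*} [Ring R]

@[simp]
theorem ballotNumber_zero_left (k : ℕ) : ballotNumber R 0 k = 1 := by
  simp [ballotNumber]

theorem ballotNumber_succ_zero (n : ℕ) : ballotNumber R (n + 1) 0 = 0 := by
  have h : 2 * (n + 1) - 1 = 2 * n + 1 := by omega
  simp [ballotNumber, h, Nat.choose_symm_half]

theorem ballotNumber_succ_succ (n k : ℕ) :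
    ballotNumber R (n + 1) (k + 1) = ballotNumber R (n + 1) k + ballotNumber R n (k + 2) := by
  have e₁ : 2 * (n + 1) + (k + 1) - 1 = 2 * n + k + 1 + 1 := by omega
  have e₂ : 2 * (n + 1) + k - 1 = 2 * n + k + 1 := by omega
  have e₃ : 2 * n + (k + 2) - 1 = 2 * n + k + 1 := by omega
  simp only [ballotNumber, e₁, e₂, e₃, Nat.add_one_ne_zero, if_false, Nat.add_sub_cancel]
  rcases n with _ | n
  · simp [Nat.choose_one_right]
  · simp only [Nat.add_one_ne_zero, if_false, Nat.add_sub_cancel, Nat.choose_succ_succ _ n,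
      Nat.choose_succ_succ _ (n + 1), Nat.cast_add]
    abel

theorem ballotNumber_eq_div_mul_choose {K : Type*} [Field K] [CharZero K] {k : ℕ} (hk : 0 < k)
    (n : ℕ) : ballotNumber K n k = k / (2 * n + k) * ((2 * n + k).choose n : K) := by
  rcases n with _ | m
  · have hk' : (k : K) ≠ 0 := by exact_mod_cast hk.ne'
    simp [hk']
  set N := 2 * m + k + 1 with hN
  have hm : (m + 1 : K) ≠ 0 := by exact_mod_cast m.succ_ne_zero
  have hN₁ : (N + 1 : K) ≠ 0 := by exact_mod_cast N.succ_ne_zero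
  have h₁ : (N.choose (m + 1) : K) * (m + 1) = N.choose m * (m + k + 1) := by
    have h := Nat.choose_succ_right_eq N m
    rw [show N - m = m + k + 1 by omega] at h
    exact_mod_cast h
  have h₂ : (N + 1 : K) * N.choose m = (N + 1).choose (m + 1) * (m + 1) := by
    exact_mod_cast Nat.add_one_mul_choose_eq N m
  have hNat : 2 * (m + 1) + k = N + 1 := by omega
  have hCast : (2 * ((m + 1 : ℕ) : K) + k) = N + 1 := by push_cast [hN]; ring
  simp only [ballotNumber, hNat, hCast, Nat.add_one_ne_zero, if_false, Nat.add_sub_cancel]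
  rw [div_mul_eq_mul_div, eq_div_iff hN₁]
  refine mul_left_cancel₀ hm ?_
  linear_combination ((N : K) + 1) * h₁ + (k : K) * h₂

end ballotNumber

namespace PowerSeries

variable {R : Type*} [CommSemiring R]

theorem pow_succ_eq_pow_add_X_mul_pow_add_two {C : R⟦X⟧} (hC : C ^ 2 * X + 1 = C) (k : ℕ) :
    C ^ (k + 1) = C ^ k + X * C ^ (k + 2) := by
  calc C ^ (k + 1) = C ^ k * (C ^ 2 * X + 1) := by rw [hC, pow_succ]
    _ = C ^ k + X * C ^ (k + 2) := by ring

theorem map_catalanSeries_sq_mul_X_add_one :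
    map (Nat.castRingHom R) catalanSeries ^ 2 * X + 1 =
      map (Nat.castRingHom R) catalanSeries := by
  simpa using congrArg (map (Nat.castRingHom R)) catalanSeries_sq_mul_X_add_one

theorem coeff_pow_eq_ballotNumber {R : Type*} [CommRing R] {C : R⟦X⟧} (hC : C ^ 2 * X + 1 = C)
    (n k : ℕ) :
    coeff n (C ^ k) = ballotNumber R n k := by
  induction n generalizing k with
  | zero =>
    have hC₀ : constantCoeff C = 1 := by
      simpa using congrArg constantCoeff hC.symm
    simp [hC₀]
  | succ n ih =>
    induction k with
    | zero => simp [ballotNumber_succ_zero]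
    | succ k ihk =>
      rw [pow_succ_eq_pow_add_X_mul_pow_add_two hC, map_add, coeff_succ_X_mul, ihk, ih,
        ballotNumber_succ_succ]

end PowerSeries

theorem stmt13 (k : ℕ) (hk : 1 ≤ k) (n : ℕ) :
    PowerSeries.coeff n ((PowerSeries.mk fun m : ℕ => (catalan m : ℚ)) ^ k) =
        ((2 * n + k - 1).choose n : ℚ) -
          (if n = 0 then 0 else ((2 * n + k - 1).choose (n - 1) : ℚ)) ∧
      ((2 * n + k - 1).choose n : ℚ) -
          (if n = 0 then 0 else ((2 * n + k - 1).choose (n - 1) : ℚ)) =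
        (k : ℚ) / (2 * (n : ℚ) + (k : ℚ)) * ((2 * n + k).choose n : ℚ) := by
  have hmk : (PowerSeries.mk fun m : ℕ => (catalan m : ℚ)) =
      map (Nat.castRingHom ℚ) catalanSeries := by
    ext m
    simp
  rw [hmk]
  exact ⟨coeff_pow_eq_ballotNumber map_catalanSeries_sq_mul_X_add_one n k,
    ballotNumber_eq_div_mul_choose hk n⟩
end

section
/- Fix b ∈ ℚ and let C(x) = Σ_{n ≥ 0} C_n x^n be the generating function of the Catalan numbers as a formal power series over ℚ. Then Σ_{n ≥ 0} M_b(n) x^n = C(x)/(1 − b·x·C(x)); equivalently, (1 − b·x·C(x)) · Σ_{n ≥ 0} M_b(n) x^n = C(x) in ℚ[[x]]. -/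
/-!
Write `A(n, k) = C(n+k, k) - C(n+k, k-1)` for the ballot numbers, so that
`M_b(n) = ∑ₖ A(n, k) b^(n-k)`. They satisfy Pascal's rule `A(n+1, k+1) = A(n, k+1) + A(n+1, k)`,
with `A(n, n) = Cₙ` and `A(n, n+1) = 0`, and induction on Pascal's rule gives the convolution
`A(n+1, K) = ∑_{i ≤ K} Cᵢ A(n-i, K-i)` for `K ≤ n+1`. Summed against powers of `b` it becomes
`M_b(n+1) = C_{n+1} + b ∑_{i ≤ n} Cᵢ M_b(n-i)`, the coefficientwise form of `M = C + b x C M`.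
-/

open Finset

/-- `M_b(n) = ∑_{k=0}^n (C(n+k,k) - C(n+k,k-1)) b^{n-k}`
(with the convention `C(n+k,-1) = 0`). -/
def MbN (b : ℚ) (n : ℕ) : ℚ :=
  ∑ k ∈ Finset.range (n + 1),
    (((n + k).choose k : ℚ) - if k = 0 then 0 else ((n + k).choose (k - 1) : ℚ)) * b ^ (n - k)

def ballot (n k : ℕ) : ℚ :=
  ((n + k).choose k : ℚ) - if k = 0 then 0 else ((n + k).choose (k - 1) : ℚ)

lemma MbN_eq_sum_ballot (b : ℚ) (n : ℕ) :
    MbN b n = ∑ k ∈ range (n + 1), ballot n k * b ^ (n - k) := rfl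

@[simp] lemma ballot_zero_right (n : ℕ) : ballot n 0 = 1 := by simp [ballot]

lemma ballot_self (n : ℕ) : ballot n n = catalan n := by
  rcases n with _ | m
  · simp [ballot]
  have hchoose : ((2 * m + 2).choose (m + 1) : ℚ) * (m + 1) = (2 * m + 2).choose m * (m + 2) := by
    have h := Nat.choose_succ_right_eq (2 * m + 2) m
    rw [show 2 * m + 2 - m = m + 2 by omega] at h
    exact_mod_cast h
  have hcat : ((m : ℚ) + 2) * catalan (m + 1) = (2 * m + 2).choose (m + 1) := by
    have h := succ_mul_catalan_eq_centralBinom (m + 1)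
    rw [Nat.centralBinom_eq_two_mul_choose] at h
    exact_mod_cast h
  have hm : (m : ℚ) + 2 ≠ 0 := by positivity
  apply mul_left_cancel₀ hm
  rw [hcat, ballot, if_neg m.succ_ne_zero, show m + 1 + (m + 1) = 2 * m + 2 by ring,
    Nat.add_sub_cancel]
  linear_combination hchoose

lemma ballot_self_succ (n : ℕ) : ballot n (n + 1) = 0 := by
  rw [ballot, if_neg n.succ_ne_zero, Nat.add_sub_cancel, ← Nat.choose_symm_add, add_comm n]
  simp

lemma ballot_succ_succ (n k : ℕ) :
    ballot (n + 1) (k + 1) = ballot n (k + 1) + ballot (n + 1) k := by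
  rcases k with _ | k
  · simp [ballot]
  · simp only [ballot, if_neg (Nat.succ_ne_zero _), Nat.add_sub_cancel]
    rw [show n + 1 + (k + 1 + 1) = n + (k + 1 + 1) + 1 by ring,
      show n + 1 + (k + 1) = n + (k + 1 + 1) by ring, Nat.choose_succ_succ' _ (k + 1),
      Nat.choose_succ_succ' _ k]
    push_cast
    ring

/-- At `K = n + 1` the last term reads `catalan (n + 1) * ballot 0 0` because `n - (n + 1) = 0`
in `ℕ`; this is what makes the convolution identity below hold up to `K = n + 1`. -/
def catalanBallotConv (n K : ℕ) : ℚ :=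
  ∑ i ∈ range (K + 1), (catalan i : ℚ) * ballot (n - i) (K - i)

lemma catalanBallotConv_zero_right (n : ℕ) : catalanBallotConv n 0 = 1 := by
  simp [catalanBallotConv]

lemma catalanBallotConv_succ_self (n : ℕ) : catalanBallotConv n (n + 1) = catalan (n + 1) := by
  rw [catalanBallotConv, sum_range_succ, Nat.sub_self, Nat.sub_eq_zero_of_le n.le_succ,
    ballot_zero_right, mul_one, add_eq_right]
  refine sum_eq_zero fun i hi => ?_
  rw [show n + 1 - i = n - i + 1 by grind, ballot_self_succ, mul_zero]

lemma catalanBallotConv_succ_succ {n K : ℕ} (hK : K ≤ n) :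
    catalanBallotConv (n + 1) (K + 1) =
      catalanBallotConv n (K + 1) + catalanBallotConv (n + 1) K := by
  simp only [catalanBallotConv, sum_range_succ _ (K + 1), Nat.sub_self, ballot_zero_right, mul_one]
  rw [add_right_comm, ← sum_add_distrib]
  congr 1
  refine sum_congr rfl fun i hi => ?_
  have hi : i ≤ K := Nat.lt_succ_iff.mp (mem_range.mp hi)
  rw [show n + 1 - i = n - i + 1 by omega, show K + 1 - i = K - i + 1 by omega, ballot_succ_succ,
    mul_add]

lemma ballot_succ_eq_catalanBallotConv {n K : ℕ} (hK : K ≤ n + 1) :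
    ballot (n + 1) K = catalanBallotConv n K := by
  induction n generalizing K with
  | zero =>
    interval_cases K
    · rw [ballot_zero_right, catalanBallotConv_zero_right]
    · rw [ballot_self, catalanBallotConv_succ_self]
  | succ n ihn =>
    induction K with
    | zero => rw [ballot_zero_right, catalanBallotConv_zero_right]
    | succ K ihK =>
      rcases Nat.lt_or_ge n K with hnK | hKn
      · obtain rfl : K = n + 1 := by omega
        rw [ballot_self, catalanBallotConv_succ_self]
      · rw [ballot_succ_succ, ihn (by omega), ihK (by omega), catalanBallotConv_succ_succ hKn]

lemma mul_MbN_eq_sum_ballot (b : ℚ) (n : ℕ) :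
    b * MbN b n = ∑ k ∈ range (n + 2), ballot n k * b ^ (n + 1 - k) := by
  rw [sum_range_succ, ballot_self_succ, zero_mul, add_zero, MbN_eq_sum_ballot, mul_sum]
  refine sum_congr rfl fun k hk => ?_
  rw [show n + 1 - k = n - k + 1 by grind, pow_succ]
  ring

lemma MbN_succ (b : ℚ) (n : ℕ) :
    MbN b (n + 1) =
      catalan (n + 1) + b * ∑ i ∈ range (n + 1), (catalan i : ℚ) * MbN b (n - i) := by
  have hinner (i : ℕ) (hi : i ≤ n) :
      ∑ K ∈ Ico i (n + 2), ballot (n - i) (K - i) * b ^ (n + 1 - K) = b * MbN b (n - i) := by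
    rw [sum_Ico_eq_sum_range, show n + 2 - i = n - i + 2 by omega, mul_MbN_eq_sum_ballot]
    refine sum_congr rfl fun k _ => ?_
    rw [Nat.add_sub_cancel_left, show n + 1 - (i + k) = n - i + 1 - k by omega]
  calc MbN b (n + 1)
      = ∑ K ∈ range (n + 2), ∑ i ∈ range (K + 1),
          (catalan i : ℚ) * (ballot (n - i) (K - i) * b ^ (n + 1 - K)) := by
        rw [MbN_eq_sum_ballot]
        refine sum_congr rfl fun K hK => ?_
        rw [ballot_succ_eq_catalanBallotConv (by grind), catalanBallotConv, sum_mul]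
        simp only [mul_assoc]
    _ = ∑ i ∈ range (n + 2), (catalan i : ℚ) *
          ∑ K ∈ Ico i (n + 2), ballot (n - i) (K - i) * b ^ (n + 1 - K) := by
        simp only [range_eq_Ico, mul_sum]
        exact (sum_Ico_Ico_comm 0 (n + 2) _).symm
    _ = catalan (n + 1) + b * ∑ i ∈ range (n + 1), (catalan i : ℚ) * MbN b (n - i) := by
        rw [sum_range_succ, add_comm]
        congr 1
        · simp
        · rw [mul_sum]
          refine sum_congr rfl fun i hi => ?_
          rw [hinner i (by grind)]
          ring

open PowerSeries

theorem stmt14 (b : ℚ) :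
    (1 - PowerSeries.C b * PowerSeries.X * PowerSeries.mk (fun n : ℕ => (catalan n : ℚ))) *
        PowerSeries.mk (fun n : ℕ => MbN b n) =
      PowerSeries.mk fun n : ℕ => (catalan n : ℚ) := by
  set Cat := mk fun n => (catalan n : ℚ)
  set M := mk fun n => MbN b n
  have hM : M = Cat + C b * X * (Cat * M) := by
    ext (_ | n)
    · simp [Cat, M, MbN]
    · rw [map_add, mul_assoc, coeff_C_mul, coeff_succ_X_mul, coeff_mul,
        Nat.sum_antidiagonal_eq_sum_range_succ_mk]
      simp only [Cat, M, coeff_mk, MbN_succ]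
  linear_combination hM
end

section
/- For every n ∈ ℕ, Σ_{k=0}^{n} (binom(n+k,k) − binom(n+k,k−1)) = C_{n+1} (with the convention binom(n+k,−1) = 0); that is, M_1(n) equals the shifted Catalan number C_{n+1}. -/
/-!
The subtracted term `binom(n+k, k-1)` equals `binom(n+k, n+1)`, also for `k = 0` where both vanish,
and `binom(n+k, k) = binom(n+k, n)`. So both halves of the sum are hockey-stick sums with lower index
at least `n`, giving `binom(2n+1, n+1) - binom(2n+1, n+2)`; multiplying by `n+2` identifies this
with `(n+2) C_{n+1} = binom(2n+2, n+1)`.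
-/

open Finset

namespace Nat

theorem sum_range_add_choose_of_le {n j : ℕ} (h : n ≤ j) (m : ℕ) :
    ∑ k ∈ range (m + 1), (n + k).choose j = (n + m + 1).choose (j + 1) := by
  induction m with
  | zero => simp [choose_succ_succ', choose_eq_zero_of_lt (lt_succ_of_le h)]
  | succ m ih => rw [sum_range_succ, ih, ← add_assoc, choose_succ_succ' (n + m + 1) j, add_comm]

theorem ite_choose_pred_eq_choose_succ (n k : ℕ) :
    (if k = 0 then 0 else (n + k).choose (k - 1)) = (n + k).choose (n + 1) := by
  rcases k with _ | k
  · simp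
  · exact choose_symm_of_eq_add (by lia)

end Nat

open Nat in
theorem catalan_succ_add_choose (n : ℕ) :
    catalan (n + 1) + (2 * n + 1).choose (n + 2) = (2 * n + 1).choose (n + 1) := by
  refine Nat.eq_of_mul_eq_mul_left (by lia : 0 < n + 2) ?_
  have hcat : (n + 2) * catalan (n + 1) = 2 * (2 * n + 1).choose (n + 1) := by
    rw [succ_mul_catalan_eq_centralBinom, centralBinom_eq_two_mul_choose,
      show 2 * (n + 1) = 2 * n + 1 + 1 by ring, choose_succ_succ', choose_symm_half]
    ring
  have hchoose : (n + 2) * (2 * n + 1).choose (n + 2) = n * (2 * n + 1).choose (n + 1) := by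
    have := choose_succ_right_eq (2 * n + 1) (n + 1)
    rw [show 2 * n + 1 - (n + 1) = n by lia] at this
    linarith
  rw [mul_add, hcat, hchoose]
  ring

theorem stmt15 (n : ℕ) :
    ∑ k ∈ Finset.range (n + 1),
        (((n + k).choose k : ℚ) - if k = 0 then 0 else ((n + k).choose (k - 1) : ℚ)) =
      (catalan (n + 1) : ℚ) := by
  have hsub (k : ℕ) : (if k = 0 then 0 else ((n + k).choose (k - 1) : ℚ)) =
      (n + k).choose (n + 1) := by
    exact_mod_cast Nat.ite_choose_pred_eq_choose_succ n k
  simp_rw [hsub, ← Nat.choose_symm_add, sum_sub_distrib, ← Nat.cast_sum]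
  rw [Nat.sum_range_add_choose_of_le le_rfl, Nat.sum_range_add_choose_of_le n.le_succ, ← two_mul,
    eq_comm, eq_sub_iff_add_eq]
  exact_mod_cast catalan_succ_add_choose n
end

section
/- For every n ∈ ℕ, Σ_{k=0}^{n} (binom(n+k,k) − binom(n+k,k−1)) · 2^{n−k} = binom(2n+1,n) (with the convention binom(n+k,−1) = 0); that is, M_2(n) = binom(2n+1,n). -/
/-! Pascal's rule `C(n+1+k, k) = C(n+k, k) + C(n+k, k-1)` turns the sum of `C(n+1+k, k) b^(n-k)`
over `k ≤ n` into `M_b(n) + 2T`, where `T` is the sum of the subtracted terms `C(n+k, k-1) b^(n-k)`.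
Splitting off its top term `C(2n+1, n)` instead, the same sum is `C(2n+1, n) + bT`, because
after the shift `k = j + 1` the subtracted terms are those of the same sum one step lower.
Hence `M_b(n) = C(2n+1, n) + (b - 2) T`, and the error term vanishes at `b = 2`. -/

open Finset

variable {R : Type*} [CommRing R]

lemma sum_choose_pred_mul_pow_eq (b : R) (n : ℕ) :
    ∑ k ∈ range (n + 1), (if k = 0 then 0 else ((n + k).choose (k - 1) : R)) * b ^ (n - k) =
      ∑ j ∈ range n, ((n + 1 + j).choose j : R) * b ^ (n - 1 - j) := by
  rw [sum_range_succ']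
  simp only [if_pos, zero_mul, add_zero, Nat.succ_ne_zero, if_false, Nat.add_sub_cancel]
  refine sum_congr rfl fun j _ => ?_
  rw [show n + (j + 1) = n + 1 + j by ring, show n - (j + 1) = n - 1 - j by omega]

lemma sum_choose_succ_mul_pow_eq_add (b : R) (n : ℕ) :
    ∑ k ∈ range (n + 1), ((n + 1 + k).choose k : R) * b ^ (n - k) =
      ∑ k ∈ range (n + 1), ((n + k).choose k : R) * b ^ (n - k) +
        ∑ k ∈ range (n + 1), (if k = 0 then 0 else ((n + k).choose (k - 1) : R)) * b ^ (n - k) := by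
  rw [← sum_add_distrib]
  refine sum_congr rfl fun k _ => ?_
  rw [← add_mul]
  rcases k with _ | j
  · simp
  · rw [show n + 1 + (j + 1) = n + (j + 1) + 1 by ring, Nat.choose_succ_succ]
    push_cast
    simp [add_comm]

lemma sum_choose_succ_mul_pow_eq_mul_add (b : R) (n : ℕ) :
    ∑ k ∈ range (n + 1), ((n + 1 + k).choose k : R) * b ^ (n - k) =
      b * ∑ j ∈ range n, ((n + 1 + j).choose j : R) * b ^ (n - 1 - j) +
        ((2 * n + 1).choose n : R) := by
  rw [sum_range_succ, mul_sum, Nat.sub_self, pow_zero, mul_one,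
    show n + 1 + n = 2 * n + 1 by ring]
  congr 1
  refine sum_congr rfl fun k hk => ?_
  rw [show n - k = n - 1 - k + 1 by have := mem_range.mp hk; omega, pow_succ]
  ring

theorem sum_ballot_mul_pow_eq (b : R) (n : ℕ) :
    ∑ k ∈ range (n + 1),
        (((n + k).choose k : R) - if k = 0 then 0 else ((n + k).choose (k - 1) : R)) *
          b ^ (n - k) =
      ((2 * n + 1).choose n : R) +
        (b - 2) * ∑ j ∈ range n, ((n + 1 + j).choose j : R) * b ^ (n - 1 - j) := by
  have hpascal := sum_choose_succ_mul_pow_eq_add b n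
  have htop := sum_choose_succ_mul_pow_eq_mul_add b n
  rw [sum_choose_pred_mul_pow_eq] at hpascal
  simp only [sub_mul, sum_sub_distrib, sum_choose_pred_mul_pow_eq]
  linear_combination htop - hpascal

theorem stmt16 (n : ℕ) :
    ∑ k ∈ Finset.range (n + 1),
        (((n + k).choose k : ℚ) - if k = 0 then 0 else ((n + k).choose (k - 1) : ℚ)) *
          2 ^ (n - k) =
      ((2 * n + 1).choose n : ℚ) := by
  simpa using sum_ballot_mul_pow_eq (2 : ℚ) n
end

section
/- Fix an integer k ≥ 1. Suppose that for every m ∈ ℕ: D_{2k,1−k−m}(n) = (−1)^{binom(m+k,2)} · D_{2k,1−k+m}(n−m−k) for all n ≥ m+k, and D_{2k,1−k−m}(n) = 0 for all n with 0 < n < m+k. Then for every n ∈ ℕ, D_{2k,1−k}(k·n) = (−1)^{binom(k,2)·n}, and D_{2k,1−k}(N) = 0 for every N ∈ ℕ not divisible by k. -/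
open Finset

/-- `C_{k,n} = (k/(2n+k)) C(2n+k,n)`, the coefficients of the `k`-th convolution power of the
Catalan generating function, extended to `ℤ` by `0` for negative indices. -/
def convCat (k : ℕ) (n : ℤ) : ℚ :=
  if 0 ≤ n then
    (k : ℚ) / (2 * (n.toNat : ℚ) + (k : ℚ)) * ((2 * n.toNat + k).choose n.toNat : ℚ)
  else 0

/-- `D_{k,m}(n) = det (C_{k,m+i+j})_{i,j=0}^{n-1}`. -/
def Dk (k : ℕ) (m : ℤ) (n : ℕ) : ℚ :=
  Matrix.det (Matrix.of fun i j : Fin n => convCat k (m + ((i : ℕ) : ℤ) + ((j : ℕ) : ℤ)))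

/- The hypotheses at `m = 0` say that `n ↦ D_{2k,1-k}(n)` satisfies
`D(n + k) = (-1)^binom(k,2) D(n)` and vanishes on `0 < n < k`; since `D(0) = 1`, writing
`N = N % k + k (N / k)` gives both claims. -/

theorem apply_add_mul_eq_pow_mul {M : Type*} [Monoid M] {f : ℕ → M} {k : ℕ} {c : M}
    (h : ∀ n, f (n + k) = c * f n) (n q : ℕ) : f (n + k * q) = c ^ q * f n := by
  induction q with
  | zero => simp
  | succ q ih => rw [Nat.mul_succ, ← add_assoc, h, ih, pow_succ', mul_assoc]

theorem apply_eq_zero_of_not_dvd {M : Type*} [MonoidWithZero M] {f : ℕ → M} {k : ℕ} {c : M}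
    (hk : 0 < k) (h : ∀ n, f (n + k) = c * f n) (hzero : ∀ n, 0 < n → n < k → f n = 0)
    {N : ℕ} (hN : ¬ k ∣ N) : f N = 0 := by
  rw [← Nat.mod_add_div N k, apply_add_mul_eq_pow_mul h,
    hzero _ (Nat.pos_of_ne_zero (mt Nat.dvd_of_mod_eq_zero hN)) (Nat.mod_lt _ hk), mul_zero]

theorem Dk_zero (k : ℕ) (m : ℤ) : Dk k m 0 = 1 :=
  Matrix.det_fin_zero

theorem stmt18 (k : ℕ) (hk : 1 ≤ k)
    (h1 : ∀ m : ℕ, ∀ n : ℕ, m + k ≤ n →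
      Dk (2 * k) (1 - (k : ℤ) - (m : ℤ)) n =
        (-1 : ℚ) ^ ((m + k).choose 2) * Dk (2 * k) (1 - (k : ℤ) + (m : ℤ)) (n - m - k))
    (h2 : ∀ m : ℕ, ∀ n : ℕ, 0 < n → n < m + k →
      Dk (2 * k) (1 - (k : ℤ) - (m : ℤ)) n = 0) :
    (∀ n : ℕ, Dk (2 * k) (1 - (k : ℤ)) (k * n) = (-1 : ℚ) ^ (k.choose 2 * n)) ∧
    (∀ N : ℕ, ¬ k ∣ N → Dk (2 * k) (1 - (k : ℤ)) N = 0) := by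
  have hstep : ∀ n, Dk (2 * k) (1 - k) (n + k) = (-1) ^ k.choose 2 * Dk (2 * k) (1 - k) n := by
    intro n
    simpa using h1 0 (n + k) (by omega)
  have hzero : ∀ n, 0 < n → n < k → Dk (2 * k) (1 - k) n = 0 := by
    intro n hn hnk
    simpa using h2 0 n hn (by omega)
  refine ⟨fun n => ?_, fun N hN => apply_eq_zero_of_not_dvd hk hstep hzero hN⟩
  rw [← zero_add (k * n), apply_add_mul_eq_pow_mul hstep, Dk_zero, mul_one, pow_mul]
end

section
/- Fix an integer k ≥ 1. Suppose that for every m ∈ ℕ: D_{2k−1,2−k−m}(n) = (−1)^{binom(m+k−1,2)} · D_{2k−1,m+1−k}(n−m−k+1) for all n ≥ m+k−1, and D_{2k−1,2−k−m}(n) = 0 for all n with 0 < n < m+k−1. Then for every n ∈ ℕ: D_{2k−1,2−k}((2k−1)·n) = (−1)^{(k−1)·n}, D_{2k−1,2−k}((2k−1)·n + k−1) = (−1)^{(k−1)·n + binom(k−1,2)}, and D_{2k−1,2−k}(N) = 0 for every N ∈ ℕ whose residue modulo 2k−1 is neither 0 nor k−1. -/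
/-!
Specialising the two hypotheses to `m = 0` and `m = 1` links `D n = D_{2k-1,2-k}(n)` with
`E n = D_{2k-1,1-k}(n)` in both directions: `D n = ± E (n - (k - 1))` and `E n = ± D (n - k)`.
Composing the two shifts gives `D (n + (2k - 1)) = (-1)^(k-1) D n`, because
`binom(k-1,2) + binom(k,2) = (k-1)^2`. Hence `D` is determined by its values on one period
`0 ≤ r < 2k - 1`, where it is `1` at `r = 0`, `± E 0 = ±1` at `r = k - 1`, and `0` elsewhere
by the vanishing hypotheses.
-/

open Finset

theorem neg_one_pow_choose_two_mul_succ {R : Type*} [Monoid R] [HasDistribNeg R] (j : ℕ) :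
    (-1 : R) ^ j.choose 2 * (-1) ^ (j + 1).choose 2 = (-1) ^ j := by
  rw [Nat.choose_succ_succ', Nat.choose_one_right, add_comm, pow_add, ← mul_assoc, ← pow_add,
    ← two_mul, pow_mul, neg_one_sq, one_pow, one_mul]

section ShiftRecurrence

variable {M : Type*} [Monoid M] {f : ℕ → M} {p : ℕ} {c : M}

theorem apply_add_of_interlaced {g : ℕ → M} {a b : ℕ} {s t : M}
    (hf : ∀ n, a ≤ n → f n = s * g (n - a)) (hg : ∀ n, b ≤ n → g n = t * f (n - b)) (n : ℕ) :
    f (n + (a + b)) = s * t * f n := by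
  rw [hf _ (by omega), hg _ (by omega), mul_assoc]
  congr 3
  omega

theorem apply_mul_add_of_apply_add (hf : ∀ n, f (n + p) = c * f n) (n r : ℕ) :
    f (p * n + r) = c ^ n * f r := by
  induction n with
  | zero => simp
  | succ n ih => rw [mul_add_one, add_right_comm, hf, ih, pow_succ', mul_assoc]

end ShiftRecurrence

theorem apply_eq_zero_of_apply_mod {M : Type*} [MonoidWithZero M] {f : ℕ → M} {p : ℕ} {c : M}
    (hf : ∀ n, f (n + p) = c * f n) {N : ℕ} (hN : f (N % p) = 0) : f N = 0 := by
  rw [← Nat.div_add_mod N p, apply_mul_add_of_apply_add hf, hN, mul_zero]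

theorem stmt19 (k : ℕ) (hk : 1 ≤ k)
    (h1 : ∀ m : ℕ, ∀ n : ℕ, m + k - 1 ≤ n →
      Dk (2 * k - 1) (2 - (k : ℤ) - (m : ℤ)) n =
        (-1 : ℚ) ^ ((m + k - 1).choose 2) *
          Dk (2 * k - 1) ((m : ℤ) + 1 - (k : ℤ)) (n - (m + k - 1)))
    (h2 : ∀ m : ℕ, ∀ n : ℕ, 0 < n → n < m + k - 1 →
      Dk (2 * k - 1) (2 - (k : ℤ) - (m : ℤ)) n = 0) :
    (∀ n : ℕ, Dk (2 * k - 1) (2 - (k : ℤ)) ((2 * k - 1) * n) = (-1 : ℚ) ^ ((k - 1) * n)) ∧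
    (∀ n : ℕ, Dk (2 * k - 1) (2 - (k : ℤ)) ((2 * k - 1) * n + (k - 1)) =
      (-1 : ℚ) ^ ((k - 1) * n + (k - 1).choose 2)) ∧
    (∀ N : ℕ, N % (2 * k - 1) ≠ 0 → N % (2 * k - 1) ≠ k - 1 →
      Dk (2 * k - 1) (2 - (k : ℤ)) N = 0) := by
  have hm1 : (2 : ℤ) - k - ((1 : ℕ) : ℤ) = 1 - k := by push_cast; ring
  have hm1' : ((1 : ℕ) : ℤ) + 1 - k = 2 - k := by push_cast; ring
  have hD : ∀ n, k - 1 ≤ n → Dk (2 * k - 1) (2 - k) n =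
      (-1) ^ (k - 1).choose 2 * Dk (2 * k - 1) (1 - k) (n - (k - 1)) := by
    simpa using h1 0
  have hE : ∀ n, k ≤ n → Dk (2 * k - 1) (1 - k) n =
      (-1) ^ k.choose 2 * Dk (2 * k - 1) (2 - k) (n - k) := by
    simpa only [hm1, hm1', show 1 + k - 1 = k by omega] using h1 1
  have hperiod : ∀ n, Dk (2 * k - 1) (2 - k) (n + (2 * k - 1)) =
      (-1) ^ (k - 1) * Dk (2 * k - 1) (2 - k) n := by
    obtain ⟨j, rfl⟩ : ∃ j, k = j + 1 := ⟨k - 1, by omega⟩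
    simpa [show 2 * (j + 1) - 1 = j + (j + 1) by omega, neg_one_pow_choose_two_mul_succ]
      using apply_add_of_interlaced hD hE
  refine ⟨fun n => ?_, fun n => ?_, fun N hN0 hNk => ?_⟩
  · simpa [pow_mul, Dk_zero] using apply_mul_add_of_apply_add hperiod n 0
  · rw [apply_mul_add_of_apply_add hperiod, hD _ le_rfl, Nat.sub_self, Dk_zero, mul_one, pow_add,
      pow_mul]
  · refine apply_eq_zero_of_apply_mod hperiod ?_
    have hlt : N % (2 * k - 1) < 2 * k - 1 := Nat.mod_lt _ (by omega)
    rcases lt_or_gt_of_ne hNk with hlow | hhigh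
    · simpa using h2 0 _ (Nat.pos_of_ne_zero hN0) (by omega)
    · rw [hD _ hhigh.le, ← hm1, h2 1 _ (by omega) (by omega), mul_zero]
end
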